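/- arXiv:2005.14420 — 4 statements merged into one kernel-verified Lean document; each statement's English description precedes it below -/
import Mathlib

section
/- If real numbers λ₁ ≥ λ₂ ≥ ... ≥ λₙ satisfy ∑ᵢ arctan(λᵢ) ≥ (n-2)·π/2, then λ_{n-1} ≥ |λₙ|. -/
open Real Finset

/-- If `λ₁ ≥ λ₂ ≥ ... ≥ λₙ` satisfy `∑ arctan λᵢ ≥ (n-2)π/2`, then `λ_{n-1} ≥ |λₙ|`. -/
theorem stmt_1 (n : ℕ) (hn : 2 ≤ n) (lam : Fin n → ℝ)
    (hmono : ∀ i j : Fin n, i ≤ j → lam j ≤ lam i)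
    (hsum : ((n : ℝ) - 2) * (Real.pi / 2) ≤ ∑ i, Real.arctan (lam i)) :
    |lam ⟨n - 1, by omega⟩| ≤ lam ⟨n - 2, by omega⟩ := by
  set a : Fin n := ⟨n - 2, by omega⟩ with ha
  set b : Fin n := ⟨n - 1, by omega⟩ with hb
  have hab : a ≠ b := by simp [ha, hb, Fin.ext_iff]; omega
  have hba : lam b ≤ lam a := hmono a b (by simp [ha, hb, Fin.le_def]; omega)
  have hbmem : b ∈ (univ : Finset (Fin n)).erase a :=
    Finset.mem_erase.mpr ⟨fun h => hab h.symm, Finset.mem_univ b⟩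
  have hsplit : ∑ i, arctan (lam i)
      = arctan (lam a) + (arctan (lam b) + ∑ i ∈ ((univ : Finset (Fin n)).erase a).erase b, arctan (lam i)) := by
    rw [Finset.add_sum_erase (univ.erase a) (fun i => arctan (lam i)) hbmem,
      Finset.add_sum_erase univ (fun i => arctan (lam i)) (Finset.mem_univ a)]
  have hcard : (((univ : Finset (Fin n)).erase a).erase b).card = n - 2 := by
    rw [Finset.card_erase_of_mem hbmem, Finset.card_erase_of_mem (Finset.mem_univ a),
      Finset.card_univ, Fintype.card_fin]
    omega
  have hS : ∑ i ∈ ((univ : Finset (Fin n)).erase a).erase b, arctan (lam i)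
      ≤ ((n : ℝ) - 2) * (π / 2) := by
    calc ∑ i ∈ ((univ : Finset (Fin n)).erase a).erase b, arctan (lam i)
        ≤ (((univ : Finset (Fin n)).erase a).erase b).card • (π / 2) :=
          Finset.sum_le_card_nsmul _ _ _ (fun i _ => (arctan_lt_pi_div_two _).le)
      _ = ((n : ℝ) - 2) * (π / 2) := by
          rw [hcard, nsmul_eq_mul]
          congr 1
          have : (2 : ℝ) ≤ n := by exact_mod_cast hn
          push_cast [Nat.cast_sub hn]
          ring
  have key : 0 ≤ arctan (lam a) + arctan (lam b) := by
    rw [hsplit] at hsum; linarith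
  have h2 : -lam b ≤ lam a := by
    by_contra h
    push_neg at h
    have := arctan_strictMono h
    rw [arctan_neg] at this
    linarith
  rw [abs_le]
  constructor <;> linarith
end

section
/- If real numbers λ₁ ≥ ... ≥ λₙ satisfy ∑ᵢ arctan(λᵢ) ≥ (n-2)·π/2, then the elementary symmetric polynomial σ_k(λ₁,...,λₙ) is nonnegative for all 1 ≤ k ≤ n-1. -/
/-!
If all `λᵢ` are nonnegative there is nothing to prove. Otherwise some `λ_N = -b` is negative, and
the other entries satisfy `∑ arctan λᵢ ≥ (n - 2) π/2 + arctan b`, which forces every `λᵢ ≥ b > 0`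
and, since `arctan (1/λᵢ) = π/2 - arctan λᵢ` and `arctan` is subadditive on `[0, ∞)`, the harmonic
bound `b ∑ 1/λᵢ ≤ 1`. For the other entries `μ` we have `σ_k(λ) = σ_k(μ) - b σ_{k-1}(μ)`, and
`σ_k(μ) = (∏ μᵢ) σ_{n-1-k}(1/μ)` turns `b σ_{k-1}(μ) ≤ σ_k(μ)` into `b σ_{j+1}(1/μ) ≤ σ_j(1/μ)`,
a consequence of `σ_{j+1} ≤ σ_1 σ_j` for nonnegative entries.
-/

open Real Finset

namespace Finset

variable {ι R : Type*}

def esymm [CommSemiring R] (s : Finset ι) (k : ℕ) (f : ι → R) : R :=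
  ∑ t ∈ s.powersetCard k, ∏ i ∈ t, f i

section CommSemiring

variable [CommSemiring R] {s : Finset ι} {f : ι → R}

theorem esymm_insert [DecidableEq ι] {a : ι} (ha : a ∉ s) (k : ℕ) :
    (insert a s).esymm (k + 1) f = s.esymm (k + 1) f + f a * s.esymm k f := by
  simp only [esymm, ← esymm_map_val, insert_val_of_notMem ha, Multiset.map_cons,
    Multiset.esymm, Multiset.powersetCard_cons, Multiset.map_add, Multiset.sum_add,
    Multiset.map_map, Function.comp_def, Multiset.prod_cons, Multiset.sum_map_mul_left]

end CommSemiring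

section OrderedSemiring

variable [CommSemiring R] [PartialOrder R] [IsOrderedRing R] {s t : Finset ι} {f : ι → R}

theorem esymm_nonneg (hf : ∀ i ∈ s, 0 ≤ f i) (k : ℕ) : 0 ≤ s.esymm k f :=
  sum_nonneg fun _ ht => prod_nonneg fun i hi => hf i ((mem_powersetCard.mp ht).1 hi)

theorem esymm_mono (hst : s ⊆ t) (hf : ∀ i ∈ t, 0 ≤ f i) (k : ℕ) :
    s.esymm k f ≤ t.esymm k f :=
  sum_le_sum_of_subset_of_nonneg (powersetCard_mono hst) fun _ hu _ =>
    prod_nonneg fun i hi => hf i ((mem_powersetCard.mp hu).1 hi)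

theorem esymm_succ_le_sum_mul_esymm (hf : ∀ i ∈ s, 0 ≤ f i) (k : ℕ) :
    s.esymm (k + 1) f ≤ (∑ i ∈ s, f i) * s.esymm k f := by
  classical
  induction s using Finset.cons_induction with
  | empty => simp [esymm, powersetCard_eq_empty.mpr (by simp : #(∅ : Finset ι) < k + 1)]
  | cons a s ha ih =>
    have hfs : ∀ i ∈ s, 0 ≤ f i := fun i hi => hf i (mem_cons_of_mem hi)
    rw [cons_eq_insert, esymm_insert ha, sum_insert ha]
    calc s.esymm (k + 1) f + f a * s.esymm k f
        ≤ (∑ i ∈ s, f i) * s.esymm k f + f a * s.esymm k f := by gcongr; exact ih hfs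
      _ = (f a + ∑ i ∈ s, f i) * s.esymm k f := by ring
      _ ≤ (f a + ∑ i ∈ s, f i) * (insert a s).esymm k f := by
        gcongr
        · exact add_nonneg (hf a (mem_cons_self a s)) (sum_nonneg hfs)
        · exact esymm_mono (subset_insert a s) (by simpa [← cons_eq_insert] using hf) k

end OrderedSemiring

theorem esymm_eq_prod_mul_esymm_inv [Semifield R] {s : Finset ι} {f : ι → R}
    (hf : ∀ i ∈ s, f i ≠ 0) {k : ℕ} (hk : k ≤ #s) :
    s.esymm k f = (∏ i ∈ s, f i) * s.esymm (#s - k) fun i => (f i)⁻¹ := by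
  classical
  rw [esymm, esymm, mul_sum]
  refine sum_nbij' (s \ ·) (s \ ·) ?_ ?_ ?_ ?_ ?_
  · intro t ht
    obtain ⟨hts, rfl⟩ := mem_powersetCard.mp ht
    exact mem_powersetCard.mpr ⟨sdiff_subset, card_sdiff_of_subset hts⟩
  · intro t ht
    obtain ⟨hts, htc⟩ := mem_powersetCard.mp ht
    exact mem_powersetCard.mpr ⟨sdiff_subset, by rw [card_sdiff_of_subset hts, htc]; omega⟩
  · intro t ht
    exact sdiff_sdiff_eq_self (mem_powersetCard.mp ht).1
  · intro t ht
    exact sdiff_sdiff_eq_self (mem_powersetCard.mp ht).1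
  · intro t ht
    have hne : ∏ i ∈ s \ t, f i ≠ 0 := prod_ne_zero_iff.mpr fun i hi => hf i (mem_sdiff.mp hi).1
    rw [← prod_sdiff (mem_powersetCard.mp ht).1, prod_inv_distrib, mul_comm,
      inv_mul_cancel_left₀ hne]

theorem mul_esymm_le_esymm_succ [Semifield R] [LinearOrder R] [IsStrictOrderedRing R]
    {s : Finset ι} {f : ι → R} {b : R} (hb : 0 ≤ b) (hf : ∀ i ∈ s, 0 < f i)
    (hbf : b * ∑ i ∈ s, (f i)⁻¹ ≤ 1) {k : ℕ} (hk : k < #s) :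
    b * s.esymm k f ≤ s.esymm (k + 1) f := by
  have hf0 : ∀ i ∈ s, f i ≠ 0 := fun i hi => (hf i hi).ne'
  have hinv : ∀ i ∈ s, 0 ≤ (f i)⁻¹ := fun i hi => (inv_pos.mpr (hf i hi)).le
  obtain ⟨j, hj⟩ : ∃ j, #s - k = j + 1 := ⟨#s - (k + 1), by omega⟩
  have hj' : #s - (k + 1) = j := by omega
  have hP : 0 ≤ ∏ i ∈ s, f i := (prod_pos hf).le
  rw [esymm_eq_prod_mul_esymm_inv hf0 hk.le, esymm_eq_prod_mul_esymm_inv hf0 hk, hj, hj']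
  calc b * ((∏ i ∈ s, f i) * s.esymm (j + 1) fun i => (f i)⁻¹)
      ≤ b * ((∏ i ∈ s, f i) * ((∑ i ∈ s, (f i)⁻¹) * s.esymm j fun i => (f i)⁻¹)) := by
        gcongr; exact esymm_succ_le_sum_mul_esymm hinv j
    _ = (∏ i ∈ s, f i) * ((b * ∑ i ∈ s, (f i)⁻¹) * s.esymm j fun i => (f i)⁻¹) := by ring
    _ ≤ (∏ i ∈ s, f i) * s.esymm j fun i => (f i)⁻¹ := by
        gcongr
        exact mul_le_of_le_one_left (esymm_nonneg hinv j) hbf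

end Finset

namespace Real

variable {ι : Type*} {s : Finset ι} {f : ι → ℝ} {b : ℝ}

theorem arctan_add_le_arctan_add_arctan {x y : ℝ} (hx : 0 ≤ x) (hy : 0 ≤ y) :
    arctan (x + y) ≤ arctan x + arctan y := by
  rcases lt_or_ge (x * y) 1 with hxy | hxy
  · rw [arctan_add hxy, arctan_le_arctan_iff, le_div_iff₀ (by linarith)]
    nlinarith [mul_nonneg (mul_nonneg hx hy) (add_nonneg hx hy)]
  · have hx0 : 0 < x := by nlinarith
    calc arctan (x + y) ≤ π / 2 := (arctan_lt_pi_div_two _).le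
      _ = arctan x + arctan x⁻¹ := by rw [arctan_inv_of_pos hx0]; ring
      _ ≤ arctan x + arctan y := by
        gcongr
        rw [inv_le_iff_one_le_mul₀ hx0]
        linarith

theorem arctan_sum_le_sum_arctan (hf : ∀ i ∈ s, 0 ≤ f i) :
    arctan (∑ i ∈ s, f i) ≤ ∑ i ∈ s, arctan (f i) :=
  le_sum_of_subadditive_on_pred arctan (0 ≤ ·) (by simp)
    (fun _ _ => arctan_add_le_arctan_add_arctan) (fun _ _ => add_nonneg) f hf

theorem le_of_add_arctan_le_sum_arctan
    (h : ((#s : ℝ) - 1) * (π / 2) + arctan b ≤ ∑ i ∈ s, arctan (f i)) {i : ι} (hi : i ∈ s) :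
    b ≤ f i := by
  classical
  have hrest : ∑ j ∈ s.erase i, arctan (f j) ≤ ((#s : ℝ) - 1) * (π / 2) := by
    calc ∑ j ∈ s.erase i, arctan (f j) ≤ #(s.erase i) • (π / 2) :=
          sum_le_card_nsmul _ _ _ fun j _ => (arctan_lt_pi_div_two _).le
      _ = ((#s : ℝ) - 1) * (π / 2) := by
          rw [nsmul_eq_mul, card_erase_of_mem hi, Nat.cast_pred (card_pos.mpr ⟨i, hi⟩)]
  rw [← add_sum_erase _ _ hi] at h
  rw [← arctan_le_arctan_iff]
  linarith

theorem mul_sum_inv_le_one_of_add_arctan_le_sum_arctan (hb : 0 < b)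
    (h : ((#s : ℝ) - 1) * (π / 2) + arctan b ≤ ∑ i ∈ s, arctan (f i)) :
    b * ∑ i ∈ s, (f i)⁻¹ ≤ 1 := by
  have hf : ∀ i ∈ s, 0 < f i := fun i hi => hb.trans_le (le_of_add_arctan_le_sum_arctan h hi)
  have hsum_inv : ∑ i ∈ s, arctan (f i)⁻¹ ≤ arctan b⁻¹ := by
    rw [sum_congr rfl fun i hi => arctan_inv_of_pos (hf i hi), sum_sub_distrib, sum_const,
      nsmul_eq_mul, arctan_inv_of_pos hb]
    linarith
  have hle : ∑ i ∈ s, (f i)⁻¹ ≤ b⁻¹ := by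
    rw [← arctan_le_arctan_iff]
    exact (arctan_sum_le_sum_arctan fun i hi => (inv_pos.mpr (hf i hi)).le).trans hsum_inv
  rwa [← le_div_iff₀' hb, one_div]

end Real

theorem stmt_4_general (n : ℕ) (lam : Fin n → ℝ)
    (hsum : ((n : ℝ) - 2) * (Real.pi / 2) ≤ ∑ i, Real.arctan (lam i)) :
    ∀ k : ℕ, 1 ≤ k → k ≤ n - 1 →
      0 ≤ ∑ s ∈ Finset.powersetCard k (Finset.univ : Finset (Fin n)), ∏ i ∈ s, lam i := by
  intro k hk hkn
  change 0 ≤ univ.esymm k lam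
  by_cases hnonneg : ∀ i, 0 ≤ lam i
  · exact esymm_nonneg (fun i _ => hnonneg i) k
  obtain ⟨N, hN⟩ := not_forall.mp hnonneg
  obtain ⟨k, rfl⟩ : ∃ j, k = j + 1 := ⟨k - 1, by omega⟩
  set s := univ.erase N
  have hcard : #s = n - 1 := by simp [s]
  have hphase : ((#s : ℝ) - 1) * (π / 2) + arctan (-lam N) ≤ ∑ i ∈ s, arctan (lam i) := by
    rw [← add_sum_erase _ _ (mem_univ N)] at hsum
    rw [hcard, Nat.cast_pred N.pos, arctan_neg]
    linarith
  have hb : 0 < -lam N := by linarith [not_le.mp hN]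
  have hpos : ∀ i ∈ s, 0 < lam i := fun i hi =>
    hb.trans_le (le_of_add_arctan_le_sum_arctan hphase hi)
  have key := mul_esymm_le_esymm_succ hb.le hpos
    (mul_sum_inv_le_one_of_add_arctan_le_sum_arctan hb hphase) (by omega : k < #s)
  rw [← insert_erase (mem_univ N), esymm_insert (notMem_erase N univ)]
  linarith

/-- If `λ₁ ≥ ... ≥ λₙ` satisfy `∑ arctan λᵢ ≥ (n-2)π/2`, then the elementary symmetric
polynomials `σ_k(λ)` are nonnegative for `1 ≤ k ≤ n-1`. -/
theorem stmt_4 (n : ℕ) (hn : 2 ≤ n) (lam : Fin n → ℝ)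
    (hmono : ∀ i j : Fin n, i ≤ j → lam j ≤ lam i)
    (hsum : ((n : ℝ) - 2) * (Real.pi / 2) ≤ ∑ i, Real.arctan (lam i)) :
    ∀ k : ℕ, 1 ≤ k → k ≤ n - 1 →
      0 ≤ ∑ s ∈ Finset.powersetCard k (Finset.univ : Finset (Fin n)), ∏ i ∈ s, lam i :=
  stmt_4_general n lam hsum
end

section
/- Let M be the n×n real symmetric matrix with diagonal entries λ'₁,...,λ'_{n-1}, a and last row/column off-diagonal entries a₁,...,a_{n-1} with |aᵢ| ≤ C, all other entries zero. As a → +∞, the eigenvalues of M are λ'₁+o(1), ..., λ'_{n-1}+o(1), a+O(1), with o(1) and O(1) uniform; more precisely, there exists a constant C' depending only on n, C, and the λ'ᵢ such that for a sufficiently large, n-1 eigenvalues of M are within C'/a of the λ'ᵢ and one eigenvalue is within C' of a. -/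
open Real Finset Matrix

/-- The bordered symmetric matrix with diagonal `λ'₁,…,λ'ₙ, a` and last row/column
`a₁,…,aₙ` (all other entries zero). -/
noncomputable def borderedMatrix (n : ℕ) (lam : Fin n → ℝ) (a : ℝ) (b : Fin n → ℝ) :
    Matrix (Fin (n + 1)) (Fin (n + 1)) ℝ :=
  Matrix.of fun i j =>
    if hi : i = Fin.last n then
      if hj : j = Fin.last n then a else b (j.castPred hj)
    else if hj : j = Fin.last n then b (i.castPred hi)
    else if i = j then lam (i.castPred hi) else 0

/-! ### Auxiliary lemmas -/

lemma eigen_toEuclideanLin {N : ℕ} {M : Matrix (Fin N) (Fin N) ℝ} (hM : M.IsHermitian) (j : Fin N) :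
    Matrix.toEuclideanLin M (hM.eigenvectorBasis j) = hM.eigenvalues j • hM.eigenvectorBasis j := by
  have h := hM.mulVec_eigenvectorBasis j
  rw [Matrix.toEuclideanLin_apply]
  ext i
  have := congrFun h i
  simpa using this

lemma onb_norm_sq {E : Type*} [NormedAddCommGroup E] [InnerProductSpace ℝ E] {ι : Type*}
    [Fintype ι] {v : ι → E} (hv : Orthonormal ℝ v) (d : ι → ℝ) :
    ‖∑ i, d i • v i‖ ^ 2 = ∑ i, d i ^ 2 := by
  have h := hv.inner_left_right_finset (s := Finset.univ) (a := fun i j => d i * d j)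
  have h2 : inner ℝ (∑ i, d i • v i) (∑ i, d i • v i)
      = ∑ i, ∑ j, (d i * d j) • (inner ℝ (v j) (v i) : ℝ) := by
    rw [inner_sum]
    refine Finset.sum_congr rfl fun i _ => ?_
    rw [real_inner_smul_right, sum_inner, Finset.mul_sum]
    refine Finset.sum_congr rfl fun j _ => ?_
    rw [real_inner_smul_left, smul_eq_mul]; ring
  rw [← real_inner_self_eq_norm_sq, h2, h]
  simp [sq]

lemma countEig {N : ℕ} {M : Matrix (Fin N) (Fin N) ℝ} (hM : M.IsHermitian)
    {ι : Type*} [Fintype ι] (v : ι → EuclideanSpace ℝ (Fin N))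
    (hv : LinearIndependent ℝ v) {x ε ε' : ℝ} (hε' : 0 ≤ ε') (hεε' : ε' < ε)
    (hres : ∀ w ∈ Submodule.span ℝ (Set.range v),
      ‖Matrix.toEuclideanLin M w - x • w‖ ≤ ε' * ‖w‖) :
    Fintype.card ι ≤ (Finset.univ.filter fun j => |hM.eigenvalues j - x| ≤ ε).card := by
  classical
  set B := hM.eigenvectorBasis with hB
  set T := (Finset.univ.filter fun j => |hM.eigenvalues j - x| ≤ ε) with hT
  by_contra hcon
  push_neg at hcon
  set W := Submodule.span ℝ (Set.range v) with hW
  set U := Submodule.span ℝ (Set.range fun j : T => (B j : EuclideanSpace ℝ (Fin N))) with hU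
  have hdimW : Module.finrank ℝ W = Fintype.card ι := finrank_span_eq_card hv
  have h1 : LinearIndependent ℝ (fun j : T => (B j : EuclideanSpace ℝ (Fin N))) :=
    B.orthonormal.linearIndependent.comp _ Subtype.val_injective
  have hdimU : Module.finrank ℝ U = T.card := by
    rw [hU, finrank_span_eq_card h1, Fintype.card_coe]
  have hdimU' : Module.finrank ℝ U + Module.finrank ℝ Uᗮ = N := by
    simpa using Submodule.finrank_add_finrank_orthogonal U
  have hne : ¬ Disjoint W Uᗮ := by
    intro hd
    have := Submodule.finrank_add_finrank_le_of_disjoint hd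
    rw [hdimW] at this
    simp only [finrank_euclideanSpace, Fintype.card_fin] at this
    omega
  rw [Submodule.disjoint_def] at hne
  push_neg at hne
  obtain ⟨w, hwW, hwO, hw0⟩ := hne
  set c : Fin N → ℝ := fun j => B.repr w j with hc
  have hc0 : ∀ j ∈ T, c j = 0 := by
    intro j hj
    have hBjU : (B j : EuclideanSpace ℝ (Fin N)) ∈ U := Submodule.subset_span ⟨⟨j, hj⟩, rfl⟩
    have h2 := (Submodule.mem_orthogonal U w).mp hwO _ hBjU
    show B.repr w j = 0
    rw [B.repr_apply_apply]
    simpa using h2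
  have hwrepr : w = ∑ j, c j • (B j : EuclideanSpace ℝ (Fin N)) := (B.sum_repr w).symm
  have hwnorm : ‖w‖ ^ 2 = ∑ j, c j ^ 2 := by
    conv_lhs => rw [hwrepr]
    exact onb_norm_sq B.orthonormal c
  have hMw : Matrix.toEuclideanLin M w - x • w
      = ∑ j, ((hM.eigenvalues j - x) * c j) • (B j : EuclideanSpace ℝ (Fin N)) := by
    conv_lhs => rw [hwrepr]
    rw [map_sum, Finset.smul_sum, ← Finset.sum_sub_distrib]
    refine Finset.sum_congr rfl fun j _ => ?_
    rw [_root_.map_smul, eigen_toEuclideanLin hM]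
    module
  have hnorm2 : ‖Matrix.toEuclideanLin M w - x • w‖ ^ 2
      = ∑ j, ((hM.eigenvalues j - x) * c j) ^ 2 := by
    rw [hMw]; exact onb_norm_sq B.orthonormal _
  have hlow : ε ^ 2 * ‖w‖ ^ 2 ≤ ‖Matrix.toEuclideanLin M w - x • w‖ ^ 2 := by
    rw [hnorm2, hwnorm, Finset.mul_sum]
    apply Finset.sum_le_sum
    intro j _
    by_cases hj : j ∈ T
    · simp [hc0 j hj]
    · have hjn : ε < |hM.eigenvalues j - x| := by
        simp only [hT, Finset.mem_filter, Finset.mem_univ, true_and, not_le] at hj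
        exact hj
      have hε : (0:ℝ) ≤ ε := le_trans hε' hεε'.le
      have h3 : ε * |c j| ≤ |hM.eigenvalues j - x| * |c j| :=
        mul_le_mul_of_nonneg_right hjn.le (abs_nonneg _)
      calc ε ^ 2 * c j ^ 2 = (ε * |c j|) * (ε * |c j|) := by rw [← sq_abs (c j)]; ring
        _ ≤ (|hM.eigenvalues j - x| * |c j|) * (|hM.eigenvalues j - x| * |c j|) :=
            mul_le_mul h3 h3 (by positivity) (by positivity)
        _ = ((hM.eigenvalues j - x) * c j) ^ 2 := by rw [← abs_mul, ← sq_abs]; ring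
  have hR := hres w hwW
  have hRn : (0:ℝ) ≤ ‖Matrix.toEuclideanLin M w - x • w‖ := norm_nonneg _
  have hwpos : (0:ℝ) < ‖w‖ := norm_pos_iff.mpr hw0
  have h4 : ‖Matrix.toEuclideanLin M w - x • w‖ ^ 2 ≤ (ε' * ‖w‖) ^ 2 :=
    pow_le_pow_left₀ hRn hR 2
  have h6 : ε ^ 2 ≤ ε' ^ 2 :=
    le_of_mul_le_mul_right (by nlinarith [h4, hlow]) (by positivity : (0:ℝ) < ‖w‖ ^ 2)
  have h7 : ε' * ε' < ε * ε := mul_self_lt_mul_self hε' hεε'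
  nlinarith [h6, h7]

lemma hall_aux {n : ℕ} (lam : Fin n → ℝ) (T : ℝ → Finset (Fin (n+1))) (Tb : Finset (Fin (n+1)))
    (h1 : ∀ t, (Finset.univ.filter (fun i => lam i = t)).card ≤ (T t).card)
    (h2 : Tb.Nonempty)
    (h3 : ∀ i i' : Fin n, lam i ≠ lam i' → Disjoint (T (lam i)) (T (lam i')))
    (h4 : ∀ i : Fin n, Disjoint (T (lam i)) Tb) :
    ∃ σ : Equiv.Perm (Fin (n+1)),
      (∀ i : Fin n, σ i.castSucc ∈ T (lam i)) ∧ σ (Fin.last n) ∈ Tb := by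
  classical
  set t' : Option (Fin n) → Finset (Fin (n+1)) :=
    fun o => o.elim Tb (fun i => T (lam i)) with ht'
  have core : ∀ u : Finset (Fin n), u.card ≤ (u.biUnion (fun i => T (lam i))).card := by
    intro u
    have himg : u.biUnion (fun i => T (lam i)) = (u.image lam).biUnion T := by
      rw [Finset.image_biUnion]
    have hdisj : ∀ t₁ ∈ u.image lam, ∀ t₂ ∈ u.image lam, t₁ ≠ t₂ → Disjoint (T t₁) (T t₂) := by
      intro t₁ ht₁ t₂ ht₂ hne
      obtain ⟨i₁, _, rfl⟩ := Finset.mem_image.mp ht₁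
      obtain ⟨i₂, _, rfl⟩ := Finset.mem_image.mp ht₂
      exact h3 i₁ i₂ hne
    rw [himg, Finset.card_biUnion hdisj, Finset.card_eq_sum_card_image lam u]
    apply Finset.sum_le_sum
    intro t ht
    exact le_trans (Finset.card_le_card (Finset.filter_subset_filter _ (Finset.subset_univ u)))
      (h1 t)
  have hall : ∀ s : Finset (Option (Fin n)), s.card ≤ (s.biUnion t').card := by
    intro s
    set u := s.eraseNone with hu
    have hsub : u.biUnion (fun i => T (lam i)) ⊆ s.biUnion t' := by
      intro x hx
      obtain ⟨i, hi, hxi⟩ := Finset.mem_biUnion.mp hx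
      exact Finset.mem_biUnion.mpr ⟨some i, Finset.mem_eraseNone.mp hi, hxi⟩
    by_cases hnone : none ∈ s
    · have hTb : Tb ⊆ s.biUnion t' := by
        intro x hx
        exact Finset.mem_biUnion.mpr ⟨none, hnone, hx⟩
      have hdTb : Disjoint (u.biUnion (fun i => T (lam i))) Tb := by
        rw [Finset.disjoint_biUnion_left]
        intro i _
        exact h4 i
      have hcs : s.card ≤ u.card + 1 := by
        have : s ⊆ Finset.insertNone u := by
          intro o ho
          match o with
          | none => simp
          | some a => exact Finset.some_mem_insertNone.mpr (Finset.mem_eraseNone.mpr ho)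
        simpa [Finset.card_insertNone] using Finset.card_le_card this
      have hunion : (u.biUnion (fun i => T (lam i))) ∪ Tb ⊆ s.biUnion t' :=
        Finset.union_subset hsub hTb
      calc s.card ≤ u.card + 1 := hcs
        _ ≤ (u.biUnion (fun i => T (lam i))).card + Tb.card := by
            have := core u
            have := Finset.card_pos.mpr h2
            omega
        _ = ((u.biUnion (fun i => T (lam i))) ∪ Tb).card :=
            (Finset.card_union_of_disjoint hdTb).symm
        _ ≤ (s.biUnion t').card := Finset.card_le_card hunion
    · have hcs : s.card ≤ u.card := by
        have : s ⊆ u.map Function.Embedding.some := by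
          intro o ho
          match o with
          | none => exact absurd ho hnone
          | some a =>
            simp only [Finset.mem_map]
            exact ⟨a, Finset.mem_eraseNone.mpr ho, rfl⟩
        simpa using Finset.card_le_card this
      exact le_trans hcs (le_trans (core u) (Finset.card_le_card hsub))
  obtain ⟨f, hfinj, hfmem⟩ := (Finset.all_card_le_biUnion_card_iff_exists_injective t').mp hall
  have hbij : Function.Bijective (f ∘ finSuccEquivLast) :=
    (Finite.injective_iff_bijective).mp (hfinj.comp finSuccEquivLast.injective)
  refine ⟨Equiv.ofBijective _ hbij, fun i => ?_, ?_⟩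
  · have := hfmem (some i)
    simpa [Equiv.ofBijective, finSuccEquivLast_castSucc, ht'] using this
  · have := hfmem none
    simpa [Equiv.ofBijective, finSuccEquivLast_last, ht'] using this

lemma euclid_sum_apply {ι : Type*} {N : ℕ} (s : Finset ι) (f : ι → EuclideanSpace ℝ (Fin N))
    (j : Fin N) : (∑ i ∈ s, f i) j = ∑ i ∈ s, f i j := by
  classical
  induction s using Finset.induction_on with
  | empty => rfl
  | insert x s h ih => rw [Finset.sum_insert h, Finset.sum_insert h, PiLp.add_apply, ih]

section facts
variable {n : ℕ} (lam : Fin n → ℝ) (a : ℝ) (b : Fin n → ℝ)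

lemma bm_last_last : borderedMatrix n lam a b (Fin.last n) (Fin.last n) = a := by
  simp [borderedMatrix]

lemma bm_cs_last (i : Fin n) :
    borderedMatrix n lam a b i.castSucc (Fin.last n) = b i := by
  simp [borderedMatrix, (Fin.castSucc_lt_last i).ne]

lemma bm_last_cs (i : Fin n) :
    borderedMatrix n lam a b (Fin.last n) i.castSucc = b i := by
  simp [borderedMatrix, (Fin.castSucc_lt_last i).ne]

lemma bm_cs_cs (i i' : Fin n) :
    borderedMatrix n lam a b i.castSucc i'.castSucc = if i = i' then lam i else 0 := by
  simp only [borderedMatrix, Matrix.of_apply, dif_neg (Fin.castSucc_lt_last i).ne,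
    dif_neg (Fin.castSucc_lt_last i').ne, Fin.castPred_castSucc]
  by_cases h : i = i'
  · simp [h]
  · simp [fun hc => h (Fin.castSucc_injective n hc), h]

/-- the single coordinate vectors -/
noncomputable def uvec {n : ℕ} (k : Fin (n+1)) : EuclideanSpace ℝ (Fin (n+1)) :=
  EuclideanSpace.single k 1

noncomputable def bhat {n : ℕ} (b : Fin n → ℝ) : EuclideanSpace ℝ (Fin (n+1)) :=
  ∑ i : Fin n, b i • uvec i.castSucc

lemma uvec_apply {n : ℕ} (k j : Fin (n+1)) : uvec k j = if j = k then (1:ℝ) else 0 := by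
  simp [uvec, EuclideanSpace.single_apply]

lemma bhat_apply_cs (i : Fin n) : bhat b i.castSucc = b i := by
  rw [bhat, euclid_sum_apply]
  rw [Finset.sum_eq_single i]
  · simp [PiLp.smul_apply, uvec_apply]
  · intro k _ hk
    simp [PiLp.smul_apply, uvec_apply,
      (show ¬ (i.castSucc = k.castSucc) from fun hc => hk ((Fin.castSucc_injective n hc).symm))]
  · simp

lemma bhat_apply_last : bhat b (Fin.last n) = 0 := by
  rw [bhat, euclid_sum_apply]
  apply Finset.sum_eq_zero
  intro i _
  simp [PiLp.smul_apply, uvec_apply, (Fin.castSucc_lt_last i).ne']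

lemma mulVec_uvec {N : ℕ} (M : Matrix (Fin N) (Fin N) ℝ) (k : Fin N) :
    ∀ j, Matrix.toEuclideanLin M (EuclideanSpace.single k 1) j = M j k := by
  intro j
  rw [Matrix.toEuclideanLin_apply]
  simp [Matrix.mulVec, dotProduct, EuclideanSpace.single_apply, mul_ite,
    Finset.sum_ite_eq', PiLp.toLp_apply]

lemma fact1 : Matrix.toEuclideanLin (borderedMatrix n lam a b) (uvec (Fin.last n))
    = a • uvec (Fin.last n) + bhat b := by
  ext j
  rw [show (uvec (Fin.last n) : EuclideanSpace ℝ (Fin (n+1)))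
      = EuclideanSpace.single (Fin.last n) 1 from rfl,
    PiLp.add_apply, PiLp.smul_apply]
  rw [mulVec_uvec]
  induction j using Fin.lastCases with
  | last => simp [bm_last_last, uvec_apply, bhat_apply_last]
  | cast i => simp [bm_cs_last, uvec_apply, bhat_apply_cs, (Fin.castSucc_lt_last i).ne]

lemma fact2 (i : Fin n) : Matrix.toEuclideanLin (borderedMatrix n lam a b) (uvec i.castSucc)
    = lam i • uvec i.castSucc + b i • uvec (Fin.last n) := by
  ext j
  rw [show (uvec i.castSucc : EuclideanSpace ℝ (Fin (n+1)))
      = EuclideanSpace.single i.castSucc 1 from rfl,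
    PiLp.add_apply, PiLp.smul_apply, PiLp.smul_apply]
  rw [mulVec_uvec]
  induction j using Fin.lastCases with
  | last => simp [bm_last_cs, uvec_apply, (Fin.castSucc_lt_last i).ne']
  | cast i' =>
    rw [bm_cs_cs]
    by_cases h : i' = i
    · simp [h, uvec_apply, (Fin.castSucc_lt_last i).ne]
    · simp [uvec_apply, h, fun hc => h (Fin.castSucc_injective n hc),
        (Fin.castSucc_lt_last i').ne]
end facts

lemma norm_bhat_le {n : ℕ} {b : Fin n → ℝ} {C : ℝ} (hb : ∀ i, |b i| ≤ C) :
    ‖bhat b‖ ≤ n * C := by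
  calc ‖bhat b‖ ≤ ∑ i : Fin n, ‖b i • uvec i.castSucc‖ := norm_sum_le _ _
    _ = ∑ i : Fin n, |b i| := by
        simp [norm_smul, uvec, EuclideanSpace.norm_single]
    _ ≤ ∑ _i : Fin n, C := Finset.sum_le_sum fun i _ => hb i
    _ = n * C := by simp [mul_comm]

lemma sum_coord_le {n : ℕ} (S : Finset (Fin n)) (w : EuclideanSpace ℝ (Fin (n+1))) :
    ∑ i ∈ S, |w i.castSucc| ≤ n * ‖w‖ := by
  have h1 : (∑ i ∈ S, |w i.castSucc|) ^ 2 ≤ S.card * ∑ i ∈ S, (w i.castSucc) ^ 2 := by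
    have := sq_sum_le_card_mul_sum_sq (s := S) (f := fun i => |w i.castSucc|)
    simpa [sq_abs] using this
  have h2 : ∑ i ∈ S, (w i.castSucc) ^ 2 ≤ ‖w‖ ^ 2 := by
    have hnorm : ‖w‖ ^ 2 = ∑ j, (w j) ^ 2 := by
      rw [EuclideanSpace.norm_eq, Real.sq_sqrt (by positivity)]
      simp [sq_abs]
    rw [hnorm]
    have himg : ∑ i ∈ S, (w i.castSucc) ^ 2 = ∑ j ∈ S.image Fin.castSucc, (w j) ^ 2 := by
      rw [Finset.sum_image]
      intro x _ y _ h
      exact Fin.castSucc_injective n h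
    rw [himg]
    exact Finset.sum_le_sum_of_subset_of_nonneg (Finset.subset_univ _)
      (fun j _ _ => by positivity)
  have h3 : (∑ i ∈ S, |w i.castSucc|) ^ 2 ≤ (n * ‖w‖) ^ 2 := by
    have hcard : (S.card : ℝ) ≤ n := by
      exact_mod_cast le_trans (Finset.card_le_card (Finset.subset_univ S)) (by simp)
    have hn : (0:ℝ) ≤ (n:ℝ) := by positivity
    calc (∑ i ∈ S, |w i.castSucc|) ^ 2 ≤ S.card * ∑ i ∈ S, (w i.castSucc) ^ 2 := h1
      _ ≤ n * ‖w‖ ^ 2 := by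
          apply mul_le_mul hcard h2 (by positivity) hn
      _ ≤ (n * ‖w‖) ^ 2 := by
          have hnn : (n:ℝ) ≤ (n:ℝ)^2 := by
            have : n ≤ n^2 := Nat.le_self_pow two_ne_zero n
            exact_mod_cast this
          nlinarith [sq_nonneg ‖w‖, norm_nonneg w]
  have h4 : (0:ℝ) ≤ ∑ i ∈ S, |w i.castSucc| := Finset.sum_nonneg fun i _ => abs_nonneg _
  exact (pow_le_pow_iff_left₀ h4 (by positivity) two_ne_zero).mp h3

lemma res_class {n : ℕ} (lam : Fin n → ℝ) (a : ℝ) (b : Fin n → ℝ) (C : ℝ) (hC : 0 < C)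
    (hb : ∀ i, |b i| ≤ C) (ha1 : 1 ≤ a) (ha2 : ∀ i, a / 2 ≤ a - lam i)
    (hM : (borderedMatrix n lam a b).IsHermitian) (t : ℝ) :
    (Finset.univ.filter fun i => lam i = t).card
      ≤ (Finset.univ.filter fun j =>
          |hM.eigenvalues j - t| ≤ (2*(n:ℝ)^2*C^2 + n*C + 1)/a).card := by
  classical
  have ha0 : (0:ℝ) < a := lt_of_lt_of_le one_pos ha1
  set S := (Finset.univ.filter fun i => lam i = t) with hS
  have hSt : ∀ i ∈ S, lam i = t := fun i hi => (Finset.mem_filter.mp hi).2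
  have hlamne : ∀ i : Fin n, lam i ≠ a := by
    intro i h
    have := ha2 i
    rw [h] at this
    linarith
  set c : Fin n → ℝ := fun i => b i / (lam i - a) with hc
  have hcb : ∀ i, |c i| ≤ 2 * C / a := by
    intro i
    have hd : a / 2 ≤ a - lam i := ha2 i
    have hd0 : (0:ℝ) < a - lam i := lt_of_lt_of_le (by linarith) hd
    have : |c i| = |b i| / (a - lam i) := by
      rw [hc, abs_div, abs_sub_comm, abs_of_pos hd0]
    rw [this]
    calc |b i| / (a - lam i) ≤ C / (a / 2) :=
          div_le_div₀ hC.le (hb i) (by linarith) hd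
      _ = 2 * C / a := by field_simp
  set v : S → EuclideanSpace ℝ (Fin (n+1)) :=
    fun i => uvec (i : Fin n).castSucc + c i • uvec (Fin.last n) with hv
  -- coordinates of v
  have hv_cs : ∀ (i₀ : S) (i : Fin n), v i₀ i.castSucc = if i = (i₀ : Fin n) then 1 else 0 := by
    intro i₀ i
    rw [hv]
    simp only [PiLp.add_apply, PiLp.smul_apply, uvec_apply, smul_eq_mul]
    rw [if_neg (Fin.castSucc_lt_last i).ne]
    by_cases h : i = (i₀ : Fin n)
    · simp [h]
    · simp [h, fun hc' => h (Fin.castSucc_injective n hc')]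
  -- linear independence
  have hvli : LinearIndependent ℝ v := by
    set proj : EuclideanSpace ℝ (Fin (n+1)) →ₗ[ℝ] (Fin n → ℝ) :=
      { toFun := fun w i => w i.castSucc
        map_add' := fun x y => by ext i; simp
        map_smul' := fun r x => by ext i; simp } with hproj
    apply LinearIndependent.of_comp proj
    have hcomp : (proj ∘ v) = fun i : S => Pi.single (i : Fin n) (1:ℝ) := by
      funext i₀
      funext i
      simp only [Function.comp_apply, hproj, LinearMap.coe_mk, AddHom.coe_mk]
      rw [hv_cs i₀ i, Pi.single_apply]
    rw [hcomp]
    have h := (Pi.basisFun ℝ (Fin n)).linearIndependent.comp ((↑) : S → Fin n)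
      Subtype.val_injective
    simpa [Function.comp_def] using h
  -- residual identity on generators
  have hgen : ∀ i : S, Matrix.toEuclideanLin (borderedMatrix n lam a b) (v i) - t • (v i)
      = c i • bhat b := by
    intro i
    have hlt : lam (i : Fin n) = t := hSt _ i.2
    rw [hv]
    simp only [map_add, _root_.map_smul, fact1, fact2]
    rw [← hlt]
    have hne : lam (i : Fin n) - a ≠ 0 := sub_ne_zero.mpr (hlamne _)
    match_scalars <;> field_simp [hne] <;>
      first
        | ring1
        | linear_combination (-(b (i : Fin n))) * (mul_inv_cancel₀ hne)
  -- residual identity on the span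
  have hkey : ∀ w ∈ Submodule.span ℝ (Set.range v),
      Matrix.toEuclideanLin (borderedMatrix n lam a b) w - t • w
        = (∑ i ∈ S, c i * w i.castSucc) • bhat b := by
    intro w hw
    induction hw using Submodule.span_induction with
    | mem x hx =>
      obtain ⟨i₀, rfl⟩ := hx
      rw [hgen i₀]
      congr 1
      rw [Finset.sum_eq_single (i₀ : Fin n)]
      · rw [hv_cs i₀ (i₀ : Fin n), if_pos rfl]
        ring
      · intro k hk hkne
        rw [hv_cs i₀ k, if_neg hkne]
        ring
      · intro h
        exact absurd i₀.2 h
    | zero => simp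
    | add x y hx hy ihx ihy =>
      calc Matrix.toEuclideanLin (borderedMatrix n lam a b) (x + y) - t • (x + y)
          = (Matrix.toEuclideanLin (borderedMatrix n lam a b) x - t • x)
            + (Matrix.toEuclideanLin (borderedMatrix n lam a b) y - t • y) := by
            rw [map_add, smul_add]; abel
        _ = (∑ i ∈ S, c i * x i.castSucc) • bhat b + (∑ i ∈ S, c i * y i.castSucc) • bhat b := by
            rw [ihx, ihy]
        _ = (∑ i ∈ S, c i * (x + y) i.castSucc) • bhat b := by
            rw [← add_smul, ← Finset.sum_add_distrib]
            congr 1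
            exact Finset.sum_congr rfl fun i _ => by
              rw [show (x + y) i.castSucc = x i.castSucc + y i.castSucc from rfl]; ring
    | smul r x hx ihx =>
      calc Matrix.toEuclideanLin (borderedMatrix n lam a b) (r • x) - t • (r • x)
          = r • (Matrix.toEuclideanLin (borderedMatrix n lam a b) x - t • x) := by
            rw [_root_.map_smul, smul_comm t r x, ← smul_sub]
        _ = r • ((∑ i ∈ S, c i * x i.castSucc) • bhat b) := by rw [ihx]
        _ = (∑ i ∈ S, c i * (r • x) i.castSucc) • bhat b := by
            rw [smul_smul, Finset.mul_sum]
            congr 1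
            exact Finset.sum_congr rfl fun i _ => by
              rw [show (r • x) i.castSucc = r * x i.castSucc from rfl]; ring
  -- norm bound on the span
  have hres : ∀ w ∈ Submodule.span ℝ (Set.range v),
      ‖Matrix.toEuclideanLin (borderedMatrix n lam a b) w - t • w‖
        ≤ (2*(n:ℝ)^2*C^2/a) * ‖w‖ := by
    intro w hw
    rw [hkey w hw, norm_smul]
    have hφ : |∑ i ∈ S, c i * w i.castSucc| ≤ (2*C/a) * (n * ‖w‖) := by
      calc |∑ i ∈ S, c i * w i.castSucc| ≤ ∑ i ∈ S, |c i * w i.castSucc| :=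
            Finset.abs_sum_le_sum_abs _ _
        _ ≤ ∑ i ∈ S, (2*C/a) * |w i.castSucc| := by
            apply Finset.sum_le_sum
            intro i _
            rw [abs_mul]
            exact mul_le_mul_of_nonneg_right (hcb i) (abs_nonneg _)
        _ = (2*C/a) * ∑ i ∈ S, |w i.castSucc| := by rw [Finset.mul_sum]
        _ ≤ (2*C/a) * (n * ‖w‖) :=
            mul_le_mul_of_nonneg_left (sum_coord_le S w) (by positivity)
    have hbn : ‖bhat b‖ ≤ n * C := norm_bhat_le hb
    calc |∑ i ∈ S, c i * w i.castSucc| * ‖bhat b‖ ≤ ((2*C/a) * (n * ‖w‖)) * (n * C) := by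
          apply mul_le_mul hφ hbn (norm_nonneg _) (by positivity)
      _ = (2*(n:ℝ)^2*C^2/a) * ‖w‖ := by field_simp
  have hεlt : 2*(n:ℝ)^2*C^2/a < (2*(n:ℝ)^2*C^2 + n*C + 1)/a := by
    apply (div_lt_div_iff_of_pos_right ha0).mpr
    nlinarith [mul_nonneg (Nat.cast_nonneg n : (0:ℝ) ≤ n) hC.le]
  have hcount := countEig hM v hvli (x := t) (ε := (2*(n:ℝ)^2*C^2 + n*C + 1)/a)
    (ε' := 2*(n:ℝ)^2*C^2/a) (by positivity) hεlt hres
  rw [← Fintype.card_coe S]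
  exact hcount

lemma res_big {n : ℕ} (lam : Fin n → ℝ) (a : ℝ) (b : Fin n → ℝ) (C : ℝ) (hC : 0 < C)
    (hb : ∀ i, |b i| ≤ C)
    (hM : (borderedMatrix n lam a b).IsHermitian) :
    1 ≤ (Finset.univ.filter fun j =>
        |hM.eigenvalues j - a| ≤ 2*(n:ℝ)^2*C^2 + n*C + 1).card := by
  classical
  set v : Unit → EuclideanSpace ℝ (Fin (n+1)) := fun _ => uvec (Fin.last n) with hv
  have hvne : (uvec (Fin.last n) : EuclideanSpace ℝ (Fin (n+1))) ≠ 0 := by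
    intro h
    have h1 : ‖(uvec (Fin.last n) : EuclideanSpace ℝ (Fin (n+1)))‖ = 1 := by
      rw [uvec, EuclideanSpace.norm_single]; simp
    rw [h, norm_zero] at h1
    exact one_ne_zero h1.symm
  have hvli : LinearIndependent ℝ v := linearIndependent_unique_iff.mpr hvne
  have hres : ∀ w ∈ Submodule.span ℝ (Set.range v),
      ‖Matrix.toEuclideanLin (borderedMatrix n lam a b) w - a • w‖ ≤ ((n:ℝ)*C) * ‖w‖ := by
    intro w hw
    have hrange : Set.range v = {uvec (Fin.last n)} := by
      rw [hv]; exact Set.range_const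
    rw [hrange, Submodule.mem_span_singleton] at hw
    obtain ⟨r, rfl⟩ := hw
    have hcalc : Matrix.toEuclideanLin (borderedMatrix n lam a b) (r • uvec (Fin.last n))
        - a • (r • uvec (Fin.last n)) = r • bhat b := by
      rw [_root_.map_smul, fact1, smul_comm a r, ← smul_sub]
      congr 1
      abel
    rw [hcalc, norm_smul, norm_smul]
    have h1 : ‖(uvec (Fin.last n) : EuclideanSpace ℝ (Fin (n+1)))‖ = 1 := by
      rw [uvec, EuclideanSpace.norm_single]; simp
    rw [h1, mul_one, mul_comm ((n:ℝ)*C) ‖r‖]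
    exact mul_le_mul_of_nonneg_left (norm_bhat_le hb) (norm_nonneg _)
  have hεlt : (n:ℝ)*C < 2*(n:ℝ)^2*C^2 + n*C + 1 := by nlinarith [sq_nonneg ((n:ℝ)*C)]
  have hcount := countEig hM v hvli (x := a) (ε := 2*(n:ℝ)^2*C^2 + n*C + 1)
    (ε' := (n:ℝ)*C) (by positivity) hεlt hres
  simpa using hcount

/-- As `a → +∞`, the eigenvalues of the bordered matrix are `λ'ᵢ + o(1)` (in fact within
`C'/a` of the `λ'ᵢ`) together with one eigenvalue `a + O(1)` (within `C'` of `a`),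
uniformly over off-diagonal entries bounded by `C`. -/
theorem stmt_6 (n : ℕ) (hn : 1 ≤ n) (lam : Fin n → ℝ) (C : ℝ) (hC : 0 < C) :
    ∃ C' > 0, ∃ a₀ > 0, ∀ a : ℝ, a₀ ≤ a → ∀ b : Fin n → ℝ, (∀ i, |b i| ≤ C) →
      ∀ hM : (borderedMatrix n lam a b).IsHermitian,
        ∃ σ : Equiv.Perm (Fin (n + 1)),
          (∀ i : Fin n, |hM.eigenvalues (σ i.castSucc) - lam i| ≤ C' / a) ∧
          |hM.eigenvalues (σ (Fin.last n)) - a| ≤ C' := by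
  classical
  set C' : ℝ := 2*(n:ℝ)^2*C^2 + n*C + 1 with hC'
  have hC'pos : 0 < C' := by positivity
  set L : ℝ := ∑ i, |lam i| with hL
  have hL0 : 0 ≤ L := Finset.sum_nonneg fun i _ => abs_nonneg _
  have hLi : ∀ i, |lam i| ≤ L := fun i =>
    Finset.single_le_sum (f := fun i => |lam i|) (fun j _ => abs_nonneg _) (Finset.mem_univ i)
  -- the minimal gap between distinct values of lam
  set G : Finset ℝ := ((Finset.univ ×ˢ Finset.univ : Finset (Fin n × Fin n)).filter
      (fun p => lam p.1 ≠ lam p.2)).image (fun p => |lam p.1 - lam p.2|) with hG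
  set g : ℝ := (insert (1:ℝ) G).min' (Finset.insert_nonempty _ _) with hg
  have hgpos : 0 < g := by
    have hmem := (insert (1:ℝ) G).min'_mem (Finset.insert_nonempty _ _)
    rw [← hg] at hmem
    rcases Finset.mem_insert.mp hmem with h | h
    · rw [h]; exact one_pos
    · rw [hG] at h
      obtain ⟨p, hp, hval⟩ := Finset.mem_image.mp h
      have hne := (Finset.mem_filter.mp hp).2
      rw [← hval]
      exact abs_pos.mpr (sub_ne_zero.mpr hne)
  have hgle : ∀ i i' : Fin n, lam i ≠ lam i' → g ≤ |lam i - lam i'| := by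
    intro i i' hne
    have hmem : |lam i - lam i'| ∈ G := by
      rw [hG]
      exact Finset.mem_image.mpr ⟨(i, i'), Finset.mem_filter.mpr
        ⟨Finset.mem_product.mpr ⟨Finset.mem_univ _, Finset.mem_univ _⟩, hne⟩, rfl⟩
    exact Finset.min'_le _ _ (Finset.mem_insert_of_mem hmem)
  have hq : (0:ℝ) ≤ 2*C'/g := div_nonneg (by linarith) hgpos.le
  refine ⟨C', hC'pos, 2*L + 2*C'/g + 4*C' + 2, by linarith, ?_⟩
  intro a ha b hb hM
  have ha0 : (0:ℝ) < a := lt_of_lt_of_le (by linarith) ha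
  have ha1 : 1 ≤ a := by linarith
  have ha2 : ∀ i, a / 2 ≤ a - lam i := by
    intro i
    have h1 : lam i ≤ L := le_trans (le_abs_self _) (hLi i)
    have h2 : 2*L ≤ a := by linarith
    linarith
  have ha3 : 2*C'/a < g := by
    have h1 : 2*C'/g + 2 ≤ a := by linarith
    rw [div_lt_iff₀ ha0]
    have h2 : g * (2*C'/g + 2) ≤ g * a := mul_le_mul_of_nonneg_left h1 hgpos.le
    have h3 : g * (2*C'/g) = 2*C' := by field_simp
    nlinarith [hgpos]
  have ha4 : 4*C' < a := by linarith
  have hCa : C'/a ≤ C' := by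
    rw [div_le_iff₀ ha0]
    nlinarith [hC'pos]
  -- the windows
  set T : ℝ → Finset (Fin (n+1)) :=
    fun t => Finset.univ.filter fun j => |hM.eigenvalues j - t| ≤ C'/a with hT
  set Tb : Finset (Fin (n+1)) :=
    Finset.univ.filter fun j => |hM.eigenvalues j - a| ≤ C' with hTb
  have h1 : ∀ t, (Finset.univ.filter (fun i => lam i = t)).card ≤ (T t).card := by
    intro t
    have := res_class lam a b C hC hb ha1 ha2 hM t
    rw [hT]
    simpa [← hC'] using this
  have h2 : Tb.Nonempty := by
    rw [← Finset.card_pos]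
    have := res_big lam a b C hC hb hM
    rw [hTb]
    simpa [← hC'] using this
  have h3 : ∀ i i' : Fin n, lam i ≠ lam i' → Disjoint (T (lam i)) (T (lam i')) := by
    intro i i' hne
    rw [Finset.disjoint_left]
    intro j hj hj'
    rw [hT, Finset.mem_filter] at hj hj'
    have hle : |lam i - lam i'| ≤ 2*C'/a := by
      calc |lam i - lam i'| ≤ |hM.eigenvalues j - lam i| + |hM.eigenvalues j - lam i'| := by
            rw [abs_sub_comm (hM.eigenvalues j) (lam i)]
            exact abs_sub_le _ _ _ |>.trans (by rw [abs_sub_comm (lam i) (hM.eigenvalues j)])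
        _ ≤ C'/a + C'/a := add_le_add hj.2 hj'.2
        _ = 2*C'/a := by ring
    exact absurd (lt_of_le_of_lt hle ha3) (not_lt.mpr (hgle i i' hne))
  have h4 : ∀ i : Fin n, Disjoint (T (lam i)) Tb := by
    intro i
    rw [Finset.disjoint_left]
    intro j hj hj'
    rw [hT, Finset.mem_filter] at hj
    rw [hTb, Finset.mem_filter] at hj'
    have hile : a - lam i ≤ C'/a + C' := by
      calc a - lam i ≤ |hM.eigenvalues j - lam i| + |hM.eigenvalues j - a| := by
            have := abs_sub_abs_le_abs_sub (hM.eigenvalues j - lam i) (hM.eigenvalues j - a)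
            have habs : |(hM.eigenvalues j - lam i) - (hM.eigenvalues j - a)| = |a - lam i| := by
              rw [show (hM.eigenvalues j - lam i) - (hM.eigenvalues j - a) = a - lam i by ring]
            calc a - lam i ≤ |a - lam i| := le_abs_self _
              _ = |(hM.eigenvalues j - lam i) - (hM.eigenvalues j - a)| := habs.symm
              _ ≤ |hM.eigenvalues j - lam i| + |hM.eigenvalues j - a| := abs_sub _ _
        _ ≤ C'/a + C' := add_le_add hj.2 hj'.2
    have : a/2 ≤ a - lam i := ha2 i
    have : a/2 ≤ C'/a + C' := le_trans this hile
    nlinarith [hCa, ha4]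
  obtain ⟨σ, hσ1, hσ2⟩ := hall_aux lam T Tb h1 h2 h3 h4
  refine ⟨σ, fun i => ?_, ?_⟩
  · have := hσ1 i
    rw [hT, Finset.mem_filter] at this
    exact this.2
  · have := hσ2
    rw [hTb, Finset.mem_filter] at this
    exact this.2
end

section
/- The map F(λ) = ∑_{i=1}^n arctan(λᵢ) defined on symmetric matrices via eigenvalues is strictly monotone: if A and B are real symmetric n×n matrices with A ≤ B (i.e., B − A positive semidefinite) and A ≠ B, then F(A) < F(B), where F(A) = ∑ arctan of the eigenvalues of A. -/
/-!
Eigenvalues, listed in decreasing order, are monotone for the Loewner order (Weyl): if `T ≤ S`,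
a dimension count gives a nonzero `x` in the span of the first `k + 1` eigenvectors of `T`
and of the last `n - k` eigenvectors of `S`, so that
`λₖ(T) ‖x‖² ≤ ⟪T x, x⟫ ≤ ⟪S x, x⟫ ≤ λₖ(S) ‖x‖²`. Composing with a strictly monotone `f` keeps the
termwise inequalities, and one of them is strict because the eigenvalue sums are the traces,
and a positive semidefinite `B - A` with zero trace vanishes.
-/

open Real Finset Matrix

open Module (finrank)

theorem Module.exists_ne_zero_forall_dual_eq_zero {K V ι : Type*} [Field K] [AddCommGroup V]
    [Module K V] [FiniteDimensional K V] [Fintype ι] (φ : ι → Dual K V)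
    (h : Fintype.card ι < finrank K V) : ∃ x ≠ 0, ∀ i, φ i x = 0 := by
  obtain ⟨x, hx, hx0⟩ := Submodule.exists_mem_ne_zero_of_ne_bot
    ((LinearMap.pi φ).ker_ne_bot_of_finrank_lt (by rwa [Module.finrank_fintype_fun_eq_card]))
  exact ⟨x, hx0, fun i => congrFun (LinearMap.mem_ker.mp hx) i⟩

theorem OrthonormalBasis.norm_sq_eq_sum_norm_sq_repr {ι 𝕜 E : Type*} [Fintype ι] [RCLike 𝕜]
    [NormedAddCommGroup E] [InnerProductSpace 𝕜 E] (b : OrthonormalBasis ι 𝕜 E) (x : E) :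
    ‖x‖ ^ 2 = ∑ i, ‖b.repr x i‖ ^ 2 := by
  rw [← b.repr.norm_map, EuclideanSpace.norm_sq_eq]

namespace LinearMap.IsSymmetric

variable {𝕜 E : Type*} [RCLike 𝕜] [NormedAddCommGroup E] [InnerProductSpace 𝕜 E]
  [FiniteDimensional 𝕜 E] {n : ℕ} {T S : E →ₗ[𝕜] E}

open RCLike

theorem re_inner_apply_self_eq_sum (hT : T.IsSymmetric) (hn : finrank 𝕜 E = n) (x : E) :
    re (inner 𝕜 (T x) x) =
      ∑ i, hT.eigenvalues hn i * ‖(hT.eigenvectorBasis hn).repr x i‖ ^ 2 := by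
  rw [← (hT.eigenvectorBasis hn).repr.inner_map_map, PiLp.inner_apply, map_sum]
  refine sum_congr rfl fun i _ => ?_
  rw [eigenvectorBasis_apply_self_apply, ← smul_eq_mul, inner_smul_real_left, RCLike.smul_re,
    inner_self_eq_norm_sq]

theorem mul_norm_sq_le_re_inner_apply_self (hT : T.IsSymmetric) (hn : finrank 𝕜 E = n)
    {μ : ℝ} {x : E}
    (h : ∀ i, (hT.eigenvectorBasis hn).repr x i ≠ 0 → μ ≤ hT.eigenvalues hn i) :
    μ * ‖x‖ ^ 2 ≤ re (inner 𝕜 (T x) x) := by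
  rw [re_inner_apply_self_eq_sum, (hT.eigenvectorBasis hn).norm_sq_eq_sum_norm_sq_repr, mul_sum]
  refine sum_le_sum fun i _ => ?_
  by_cases hi : (hT.eigenvectorBasis hn).repr x i = 0
  · simp [hi]
  · exact mul_le_mul_of_nonneg_right (h i hi) (sq_nonneg _)

theorem re_inner_apply_self_le_mul_norm_sq (hT : T.IsSymmetric) (hn : finrank 𝕜 E = n)
    {μ : ℝ} {x : E}
    (h : ∀ i, (hT.eigenvectorBasis hn).repr x i ≠ 0 → hT.eigenvalues hn i ≤ μ) :
    re (inner 𝕜 (T x) x) ≤ μ * ‖x‖ ^ 2 := by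
  rw [re_inner_apply_self_eq_sum, (hT.eigenvectorBasis hn).norm_sq_eq_sum_norm_sq_repr, mul_sum]
  refine sum_le_sum fun i _ => ?_
  by_cases hi : (hT.eigenvectorBasis hn).repr x i = 0
  · simp [hi]
  · exact mul_le_mul_of_nonneg_right (h i hi) (sq_nonneg _)

theorem eigenvalues_le_eigenvalues_of_le (hT : T.IsSymmetric) (hS : S.IsSymmetric)
    (hn : finrank 𝕜 E = n) (hTS : T ≤ S) (k : Fin n) :
    hT.eigenvalues hn k ≤ hS.eigenvalues hn k := by
  let bT := (hT.eigenvectorBasis hn).toBasis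
  let bS := (hS.eigenvectorBasis hn).toBasis
  obtain ⟨x, hx0, hx⟩ := Module.exists_ne_zero_forall_dual_eq_zero
    (Sum.elim (fun i : Ioi k => bT.coord i) (fun i : Iio k => bS.coord i))
    (by simp only [Fintype.card_sum, Fintype.card_coe, Fin.card_Ioi, Fin.card_Iio]; omega)
  have hTx : hT.eigenvalues hn k * ‖x‖ ^ 2 ≤ re (inner 𝕜 (T x) x) := by
    refine hT.mul_norm_sq_le_re_inner_apply_self hn fun i hi => hT.eigenvalues_antitone hn ?_
    by_contra! hki
    exact hi (by simpa [bT] using hx (.inl ⟨i, mem_Ioi.mpr hki⟩))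
  have hSx : re (inner 𝕜 (S x) x) ≤ hS.eigenvalues hn k * ‖x‖ ^ 2 := by
    refine hS.re_inner_apply_self_le_mul_norm_sq hn fun i hi => hS.eigenvalues_antitone hn ?_
    by_contra! hik
    exact hi (by simpa [bS] using hx (.inr ⟨i, mem_Iio.mpr hik⟩))
  have hTSx : re (inner 𝕜 (T x) x) ≤ re (inner 𝕜 (S x) x) := by
    have := hTS.re_inner_nonneg_left x
    rwa [sub_apply, inner_sub_left, map_sub, sub_nonneg] at this
  exact le_of_mul_le_mul_right (hTx.trans (hTSx.trans hSx)) (by positivity)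

end LinearMap.IsSymmetric

namespace Matrix.IsHermitian

open scoped ComplexOrder

variable {𝕜 n : Type*} [RCLike 𝕜] [Fintype n] [DecidableEq n] {A B : Matrix n n 𝕜}

/- `eigenvalues` lists the sorted `eigenvalues₀` through a reindexing that depends only on `n`,
so this is Weyl's inequality. -/
theorem eigenvalues_le_eigenvalues_of_posSemidef_sub (hA : A.IsHermitian) (hB : B.IsHermitian)
    (hAB : (B - A).PosSemidef) (i : n) : hA.eigenvalues i ≤ hB.eigenvalues i :=
  LinearMap.IsSymmetric.eigenvalues_le_eigenvalues_of_le _ _ _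
    (by rwa [LinearMap.le_def, ← map_sub, isPositive_toEuclideanLin_iff]) _

theorem sum_eigenvalues_lt_of_posSemidef_sub (hA : A.IsHermitian) (hB : B.IsHermitian)
    (hAB : (B - A).PosSemidef) (hne : A ≠ B) : ∑ i, hA.eigenvalues i < ∑ i, hB.eigenvalues i := by
  refine (sum_le_sum fun i _ => eigenvalues_le_eigenvalues_of_posSemidef_sub hA hB hAB i)
    |>.lt_of_ne fun heq => hne ?_
  have : (B - A).trace = 0 := by
    rw [trace_sub, hA.trace_eq_sum_eigenvalues, hB.trace_eq_sum_eigenvalues, ← RCLike.ofReal_sum,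
      ← RCLike.ofReal_sum, heq, sub_self]
  exact (sub_eq_zero.mp (hAB.trace_eq_zero_iff.mp this)).symm

theorem sum_comp_eigenvalues_lt_of_posSemidef_sub {f : ℝ → ℝ} (hf : StrictMono f)
    (hA : A.IsHermitian) (hB : B.IsHermitian) (hAB : (B - A).PosSemidef) (hne : A ≠ B) :
    ∑ i, f (hA.eigenvalues i) < ∑ i, f (hB.eigenvalues i) := by
  obtain ⟨i, -, hi⟩ := exists_lt_of_sum_lt (sum_eigenvalues_lt_of_posSemidef_sub hA hB hAB hne)
  exact sum_lt_sum
    (fun j _ => hf.monotone (eigenvalues_le_eigenvalues_of_posSemidef_sub hA hB hAB j))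
    ⟨i, mem_univ i, hf hi⟩

end Matrix.IsHermitian

/-- Strict monotonicity of `F(A) = ∑ arctan λᵢ(A)` on symmetric matrices:
if `A ≤ B` (i.e. `B - A` is positive semidefinite) and `A ≠ B`, then `F(A) < F(B)`. -/
theorem stmt_7 (n : ℕ) (A B : Matrix (Fin n) (Fin n) ℝ)
    (hA : A.IsHermitian) (hB : B.IsHermitian)
    (hAB : (B - A).PosSemidef) (hne : A ≠ B) :
    ∑ i, Real.arctan (hA.eigenvalues i) < ∑ i, Real.arctan (hB.eigenvalues i) :=
  hA.sum_comp_eigenvalues_lt_of_posSemidef_sub Real.arctan_strictMono hB hAB hne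
end
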